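/- Let Q = k_q[x₁,…,xₙ] be a skew polynomial ring and let f, g ∈ Q be homogeneous normal elements. Then there exists p ∈ k* such that f g = p g f. -/

import Mathlib

noncomputable section

/-- The skew-commutation relations defining the skew polynomial ring. -/
def skewRel (k : Type*) [Field k] {n : ℕ} (q : Fin n → Fin n → kˣ) :
    FreeAlgebra k (Fin n) → FreeAlgebra k (Fin n) → Prop :=
  fun a b => ∃ i j : Fin n, a = FreeAlgebra.ι k i * FreeAlgebra.ι k j ∧
    b = (q i j : k) • (FreeAlgebra.ι k j * FreeAlgebra.ι k i)

/-- The skew polynomial ring `k_q[x₁,…,xₙ]`. -/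
abbrev SkewPoly (k : Type*) [Field k] {n : ℕ} (q : Fin n → Fin n → kˣ) : Type _ :=
  RingQuot (skewRel k q)

/-- The variables `x i` of the skew polynomial ring. -/
def skewVar (k : Type*) [Field k] {n : ℕ} (q : Fin n → Fin n → kˣ) (i : Fin n) :
    SkewPoly k q :=
  RingQuot.mkAlgHom k (skewRel k q) (FreeAlgebra.ι k i)

/-- The span of the words of length `d` in the variables: the homogeneous component of
internal degree `d` of the skew polynomial ring (deg xᵢ = 1). -/
def wordSpan (k : Type*) [Field k] {n : ℕ} (q : Fin n → Fin n → kˣ) (d : ℕ) :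
    Submodule k (SkewPoly k q) :=
  Submodule.span k
    {m : SkewPoly k q | ∃ w : List (Fin n), w.length = d ∧ m = (w.map (skewVar k q)).prod}

/-!
The skew polynomial ring acts faithfully on the coefficient space `k[ℕⁿ]`, `x i` shifting the
exponent by `eᵢ = single i 1` with a scalar `twist q eᵢ β`. This identifies it with the monoid
algebra of `ℕⁿ` twisted by the bimultiplicative cocycle `twist q`, in which
`x^α x^β = commFactor q α β • x^β x^α`.

If `f` is homogeneous and `f * x i = b * f`, comparing the coefficients at `eⱼ + δ`, for `x^δ` a
monomial of `f` of maximal `x j`-degree, shows that `x i` is the only monomial of degree one in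
`b`; comparing the coefficients at `α + eᵢ` then shows that `commFactor q α eᵢ` takes the same
value for every monomial `x^α` of `f`. Symmetrically `commFactor q eⱼ β` is constant on the
monomials of `g`, so by bimultiplicativity `commFactor q α β` is one scalar `p` for all monomials
`x^α` of `f` and `x^β` of `g`, whence `f g = p g f`.
-/

/-! `TwistedConvolution.mul c` is the multiplication of the monoid algebra of `σ →₀ ℕ` twisted
by `c`, i.e. `(a • x^α) * (b • x^β) = (a * b * c α β) • x^(α + β)`; `shift c α` is left
multiplication by `x^α`. -/

namespace TwistedConvolution

open Finsupp

variable {k σ : Type*} [Field k] (c : (σ →₀ ℕ) → (σ →₀ ℕ) → kˣ)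

def shift (α : σ →₀ ℕ) : ((σ →₀ ℕ) →₀ k) →ₗ[k] ((σ →₀ ℕ) →₀ k) :=
  Finsupp.lsum k fun β => (c α β : k) • Finsupp.lsingle (α + β)

def mul :
    ((σ →₀ ℕ) →₀ k) →ₗ[k] ((σ →₀ ℕ) →₀ k) →ₗ[k] ((σ →₀ ℕ) →₀ k) :=
  Finsupp.lsum k fun α => LinearMap.toSpanSingleton k _ (shift c α)

lemma shift_single (α β : σ →₀ ℕ) (b : k) :
    shift c α (single β b) = (c α β : k) • single (α + β) b := by
  simp [shift]

lemma shift_zero (hc : ∀ β, c 0 β = 1) : shift c 0 = 1 := by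
  refine Finsupp.lhom_ext fun β b => ?_
  rw [shift_single, hc, Units.val_one, one_smul, zero_add, Module.End.one_apply]

lemma shift_mul_shift (hc : ∀ α β γ, c β γ * c α (β + γ) = c α β * c (α + β) γ)
    (α β : σ →₀ ℕ) : shift c α * shift c β = (c α β : k) • shift c (α + β) := by
  refine Finsupp.lhom_ext fun γ b => ?_
  rw [Module.End.mul_apply, shift_single, map_smul, shift_single, LinearMap.smul_apply,
    shift_single, smul_smul, smul_smul, ← Units.val_mul, hc, Units.val_mul, add_assoc]

lemma mul_single_left (α : σ →₀ ℕ) (a : k) : mul c (single α a) = a • shift c α := by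
  simp [mul, LinearMap.toSpanSingleton_apply]

lemma exists_eq_single_of_add_eq {α α' β : σ →₀ ℕ} {j : σ} (hdeg : α.degree = α'.degree)
    (h : β + α = single j 1 + α') : ∃ j', β = single j' 1 := by
  have hβ : β.degree = 1 := by
    have := congrArg degree h
    rw [map_add, map_add, degree_single, hdeg] at this
    omega
  obtain ⟨j', hj'⟩ := (range_single_one (σ := σ)).symm.subset hβ
  exact ⟨j', hj'.symm⟩

variable [DecidableEq σ]

lemma mul_apply (F G : (σ →₀ ℕ) →₀ k) (γ : σ →₀ ℕ) :
    mul c F G γ = ∑ x ∈ F.support ×ˢ G.support,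
      if x.1 + x.2 = γ then F x.1 * c x.1 x.2 * G x.2 else 0 := by
  conv_lhs => rw [← sum_single F, ← sum_single G]
  rw [Finset.sum_product, Finsupp.sum, map_sum, LinearMap.sum_apply, Finsupp.finsetSum_apply]
  refine Finset.sum_congr rfl fun α _ => ?_
  rw [mul_single_left, LinearMap.smul_apply, Finsupp.sum, map_sum, Finset.smul_sum,
    Finsupp.finsetSum_apply]
  refine Finset.sum_congr rfl fun β _ => ?_
  rw [shift_single, smul_smul, Finsupp.smul_apply, single_apply, smul_eq_mul]
  split_ifs <;> ring

lemma mul_swap (F G : (σ →₀ ℕ) →₀ k) : mul c F G = mul (fun α β => c β α) G F := by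
  ext γ
  rw [mul_apply, mul_apply, Finset.sum_product, Finset.sum_product, Finset.sum_comm]
  refine Finset.sum_congr rfl fun β _ => Finset.sum_congr rfl fun α _ => ?_
  rw [add_comm]
  split_ifs <;> ring

lemma mul_apply_eq_zero {F G : (σ →₀ ℕ) →₀ k} {γ : σ →₀ ℕ}
    (h : ∀ α ∈ F.support, ∀ β ∈ G.support, α + β ≠ γ) : mul c F G γ = 0 := by
  rw [mul_apply]
  refine Finset.sum_eq_zero fun x hx => if_neg ?_
  rw [Finset.mem_product] at hx
  exact h x.1 hx.1 x.2 hx.2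

lemma mul_apply_add_of_unique {F G : (σ →₀ ℕ) →₀ k} {α β : σ →₀ ℕ}
    (h : ∀ α' ∈ F.support, ∀ β' ∈ G.support, α' + β' = α + β → α' = α ∧ β' = β) :
    mul c F G (α + β) = F α * c α β * G β := by
  rw [mul_apply, Finset.sum_eq_single (α, β), if_pos rfl]
  · rintro x hx hne
    rw [Finset.mem_product] at hx
    exact if_neg fun hsum => hne (Prod.ext_iff.mpr (h x.1 hx.1 x.2 hx.2 hsum))
  · intro hαβ
    rw [Finset.mem_product, not_and_or, notMem_support_iff, notMem_support_iff] at hαβ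
    rcases hαβ with hα | hβ <;> simp [*]

lemma mul_eq_smul_mul_swap {F G : (σ →₀ ℕ) →₀ k} {p : k}
    (h : ∀ α ∈ F.support, ∀ β ∈ G.support, (c α β : k) = p * c β α) :
    mul c F G = p • mul c G F := by
  ext γ
  rw [Finsupp.smul_apply, mul_apply, mul_apply, Finset.sum_product, Finset.sum_product,
    Finset.sum_comm, smul_eq_mul, Finset.mul_sum]
  refine Finset.sum_congr rfl fun β hβ => ?_
  rw [Finset.mul_sum]
  refine Finset.sum_congr rfl fun α hα => ?_
  rw [add_comm β, h α hα β hβ]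
  split_ifs <;> ring

variable {c} {F B : (σ →₀ ℕ) →₀ k} {d : ℕ} {i : σ}

/-- Compare the coefficients of `x_j * x^δ` for a monomial `x^δ` of `F` of maximal `x_j`-degree. -/
lemma apply_single_eq_zero_of_mul_single_eq (hF : ∀ α ∈ F.support, α.degree = d)
    (hB : mul c F (single (single i 1) 1) = mul c B F) (hF₀ : F ≠ 0) {j : σ} (hji : j ≠ i) :
    B (single j 1) = 0 := by
  by_contra hBj
  obtain ⟨δ, hδ, hmax⟩ := F.support.exists_max_image (· j) (support_nonempty_iff.mpr hF₀)
  have hL : mul c F (single (single i 1) 1) (single j 1 + δ) = 0 := by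
    refine mul_apply_eq_zero c fun α hα β hβ hsum => ?_
    rw [Finset.mem_singleton.mp (support_single_subset hβ)] at hsum
    have := DFunLike.congr_fun hsum j
    rw [Finsupp.add_apply, Finsupp.add_apply, single_eq_same, single_eq_of_ne hji] at this
    have := hmax α hα
    omega
  have hR : mul c B F (single j 1 + δ) = B (single j 1) * c (single j 1) δ * F δ := by
    refine mul_apply_add_of_unique c fun β hβ α hα hsum => ?_
    obtain ⟨j', rfl⟩ := exists_eq_single_of_add_eq ((hF α hα).trans (hF δ hδ).symm) hsum
    have hj := DFunLike.congr_fun hsum j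
    rw [Finsupp.add_apply, Finsupp.add_apply, single_eq_same, single_apply] at hj
    have := hmax α hα
    have hj' : j' = j := by by_contra hne; rw [if_neg hne] at hj; omega
    subst hj'
    exact ⟨rfl, add_left_cancel hsum⟩
  have := DFunLike.congr_fun hB (single j 1 + δ)
  rw [hL, hR] at this
  exact mul_ne_zero (mul_ne_zero hBj (Units.ne_zero _)) (mem_support_iff.mp hδ) this.symm

lemma twist_eq_of_mul_single_eq (hF : ∀ α ∈ F.support, α.degree = d)
    (hB : mul c F (single (single i 1) 1) = mul c B F) {α : σ →₀ ℕ} (hα : α ∈ F.support) :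
    (c α (single i 1) : k) = B (single i 1) * c (single i 1) α := by
  have hF₀ : F ≠ 0 := support_nonempty_iff.mp ⟨α, hα⟩
  have hL : mul c F (single (single i 1) 1) (α + single i 1) = F α * c α (single i 1) := by
    rw [mul_apply_add_of_unique c, single_eq_same, mul_one]
    intro α' _ β hβ hsum
    rw [Finset.mem_singleton.mp (support_single_subset hβ)] at hsum ⊢
    exact ⟨add_right_cancel hsum, rfl⟩
  have hR : mul c B F (single i 1 + α) = B (single i 1) * c (single i 1) α * F α := by
    refine mul_apply_add_of_unique c fun β hβ α' hα' hsum => ?_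
    obtain ⟨j', rfl⟩ := exists_eq_single_of_add_eq ((hF α' hα').trans (hF α hα).symm) hsum
    obtain rfl : j' = i := by
      by_contra hne
      exact mem_support_iff.mp hβ (apply_single_eq_zero_of_mul_single_eq hF hB hF₀ hne)
    exact ⟨rfl, add_left_cancel hsum⟩
  have := DFunLike.congr_fun hB (α + single i 1)
  rw [hL, add_comm α, hR] at this
  exact mul_left_cancel₀ (mem_support_iff.mp hα) (this.trans (mul_comm _ _))

end TwistedConvolution

namespace SkewPoly

open Finsupp TwistedConvolution

variable {k : Type*} [Field k] {n : ℕ} (q : Fin n → Fin n → kˣ)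

/-- `x^α * x^β = twist q α β • x^(α + β)` for the ascending monomials `x^α = x₀^α₀ ⋯ xₙ₋₁^αₙ₋₁`:
each `x i` of the left factor has to pass each `x j`, `j < i`, of the right one. -/
def twist (α β : Fin n →₀ ℕ) : kˣ :=
  ∏ i, ∏ j, if j < i then q i j ^ (α i * β j) else 1

lemma twist_add_left (α α' β : Fin n →₀ ℕ) :
    twist q (α + α') β = twist q α β * twist q α' β := by
  simp only [twist, ← Finset.prod_mul_distrib]
  refine Finset.prod_congr rfl fun i _ => Finset.prod_congr rfl fun j _ => ?_
  split_ifs <;> simp [add_mul, pow_add]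

lemma twist_add_right (α β β' : Fin n →₀ ℕ) :
    twist q α (β + β') = twist q α β * twist q α β' := by
  simp only [twist, ← Finset.prod_mul_distrib]
  refine Finset.prod_congr rfl fun i _ => Finset.prod_congr rfl fun j _ => ?_
  split_ifs <;> simp [mul_add, pow_add]

lemma twist_zero_left (β : Fin n →₀ ℕ) : twist q 0 β = 1 := by
  simp [twist]

lemma twist_zero_right (α : Fin n →₀ ℕ) : twist q α 0 = 1 := by
  simp [twist]

lemma twist_cocycle (α β γ : Fin n →₀ ℕ) :
    twist q β γ * twist q α (β + γ) = twist q α β * twist q (α + β) γ := by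
  rw [twist_add_left, twist_add_right]
  ac_rfl

lemma twist_single_single (i j : Fin n) :
    twist q (single i 1) (single j 1) = if j < i then q i j else 1 := by
  rw [twist, Finset.prod_eq_single i, Finset.prod_eq_single j] <;> intros <;>
    simp_all [single_apply, eq_comm]

variable (hq1 : ∀ i : Fin n, q i i = 1) (hq2 : ∀ i j : Fin n, q i j = (q j i)⁻¹)

include hq1 hq2 in
lemma twist_single_single_eq (i j : Fin n) :
    twist q (single i 1) (single j 1) = q i j * twist q (single j 1) (single i 1) := by
  rw [twist_single_single, twist_single_single]
  rcases lt_trichotomy i j with h | rfl | h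
  · rw [if_neg (asymm h), if_pos h, hq2 i j, inv_mul_cancel]
  · rw [if_neg (lt_irrefl i), hq1, one_mul]
  · rw [if_pos h, if_neg (asymm h), mul_one]

def commFactor (α β : Fin n →₀ ℕ) : kˣ := twist q α β * (twist q β α)⁻¹

lemma twist_eq_commFactor_mul (α β : Fin n →₀ ℕ) :
    twist q α β = commFactor q α β * twist q β α := by
  rw [commFactor, inv_mul_cancel_right]

lemma commFactor_swap (α β : Fin n →₀ ℕ) : commFactor q β α = (commFactor q α β)⁻¹ := by
  rw [commFactor, commFactor, mul_inv_rev, inv_inv]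

lemma commFactor_val_eq {α β : Fin n →₀ ℕ} {b : k}
    (h : (twist q α β : k) = b * twist q β α) : (commFactor q α β : k) = b := by
  rw [commFactor, Units.val_mul, h, Units.val_inv_eq_inv_val,
    mul_inv_cancel_right₀ (Units.ne_zero _)]

lemma commFactor_add_right (α β β' : Fin n →₀ ℕ) :
    commFactor q α (β + β') = commFactor q α β * commFactor q α β' := by
  rw [commFactor, commFactor, commFactor, twist_add_right, twist_add_left, mul_inv]
  ac_rfl

lemma commFactor_single_right (α : Fin n →₀ ℕ) (j : Fin n) (m : ℕ) :
    commFactor q α (single j m) = commFactor q α (single j 1) ^ m := by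
  induction m with
  | zero => simp [commFactor, twist_zero_left, twist_zero_right]
  | succ m ih => rw [single_add, commFactor_add_right, ih, pow_succ]

lemma commFactor_congr_right {α α' : Fin n →₀ ℕ}
    (h : ∀ j, commFactor q α (single j 1) = commFactor q α' (single j 1)) (β : Fin n →₀ ℕ) :
    commFactor q α β = commFactor q α' β := by
  induction β using Finsupp.induction with
  | zero => simp [commFactor, twist_zero_left, twist_zero_right]
  | single_add j m β _ _ ih =>
    rw [commFactor_add_right, commFactor_add_right, ih, commFactor_single_right q α j m,
      commFactor_single_right q α' j m, h]

lemma exists_commFactor_eq {S T : Set (Fin n →₀ ℕ)}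
    (hS : ∀ j, ∀ α ∈ S, ∀ α' ∈ S, commFactor q α (single j 1) = commFactor q α' (single j 1))
    (hT : ∀ j, ∀ β ∈ T, ∀ β' ∈ T, commFactor q β (single j 1) = commFactor q β' (single j 1)) :
    ∃ p : kˣ, ∀ α ∈ S, ∀ β ∈ T, commFactor q α β = p := by
  rcases (S ×ˢ T).eq_empty_or_nonempty with h | ⟨⟨α₀, β₀⟩, hα₀, hβ₀⟩
  · exact ⟨1, fun α hα β hβ => (Set.notMem_empty _ (h ▸ Set.mk_mem_prod hα hβ)).elim⟩
  refine ⟨commFactor q α₀ β₀, fun α hα β hβ => ?_⟩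
  rw [commFactor_congr_right q (fun j => hS j α hα α₀ hα₀), commFactor_swap,
    commFactor_congr_right q (fun j => hT j β hβ β₀ hβ₀), ← commFactor_swap]

lemma skewVar_mul_skewVar (i j : Fin n) :
    skewVar k q i * skewVar k q j = (q i j : k) • (skewVar k q j * skewVar k q i) := by
  simpa [skewVar] using RingQuot.mkAlgHom_rel k (s := skewRel k q) ⟨i, j, rfl, rfl⟩

def word (w : List (Fin n)) : SkewPoly k q := (w.map (skewVar k q)).prod

def weight (w : List (Fin n)) : Fin n →₀ ℕ := Multiset.toFinsupp w

def wordCoeff : List (Fin n) → kˣ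
  | [] => 1
  | i :: w => twist q (single i 1) (weight w) * wordCoeff w

lemma word_nil : word q [] = 1 := rfl

lemma word_cons (i : Fin n) (w : List (Fin n)) : word q (i :: w) = skewVar k q i * word q w := by
  simp [word]

lemma word_append (w w' : List (Fin n)) : word q (w ++ w') = word q w * word q w' := by
  simp [word]

lemma weight_nil : weight ([] : List (Fin n)) = 0 := Multiset.toFinsupp_zero

lemma weight_cons (i : Fin n) (w : List (Fin n)) : weight (i :: w) = single i 1 + weight w := by
  rw [weight, ← Multiset.cons_coe, ← Multiset.singleton_add, Multiset.toFinsupp_add,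
    Multiset.toFinsupp_singleton, weight]

lemma degree_weight (w : List (Fin n)) : (weight w).degree = w.length := by
  induction w with
  | nil => rw [weight_nil, map_zero, List.length_nil]
  | cons i w ih => rw [weight_cons, map_add, degree_single, ih, List.length_cons, add_comm]

lemma exists_word_eq_smul_of_perm {w w' : List (Fin n)} (h : w.Perm w') :
    ∃ u : kˣ, word q w = (u : k) • word q w' := by
  induction h with
  | nil => exact ⟨1, by simp⟩
  | cons i _ ih =>
    obtain ⟨u, hu⟩ := ih
    exact ⟨u, by rw [word_cons, word_cons, hu, mul_smul_comm]⟩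
  | swap i j w =>
    refine ⟨q j i, ?_⟩
    rw [word_cons, word_cons, word_cons, word_cons, ← mul_assoc, skewVar_mul_skewVar,
      smul_mul_assoc, mul_assoc]
  | trans _ _ ih₁ ih₂ =>
    obtain ⟨u₁, hu₁⟩ := ih₁
    obtain ⟨u₂, hu₂⟩ := ih₂
    exact ⟨u₁ * u₂, by rw [hu₁, hu₂, smul_smul, Units.val_mul]⟩

lemma span_range_word : Submodule.span k (Set.range (word q)) = ⊤ := by
  refine Submodule.eq_top_iff'.mpr fun z => ?_
  obtain ⟨p, rfl⟩ := RingQuot.mkAlgHom_surjective k (skewRel k q) z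
  induction p using FreeAlgebra.induction with
  | grade0 r =>
    rw [AlgHom.commutes, Algebra.algebraMap_eq_smul_one, ← word_nil q]
    exact Submodule.smul_mem _ _ (Submodule.subset_span ⟨[], rfl⟩)
  | grade1 i => exact Submodule.subset_span ⟨[i], by simp [word, skewVar]⟩
  | mul a b ha hb =>
    rw [map_mul]
    have hab := Submodule.mul_mem_mul ha hb
    rw [Submodule.span_mul_span] at hab
    refine Submodule.span_mono ?_ hab
    rintro _ ⟨_, ⟨w, rfl⟩, _, ⟨w', rfl⟩, rfl⟩
    exact ⟨w ++ w', word_append q w w'⟩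
  | add a b ha hb => rw [map_add]; exact Submodule.add_mem _ ha hb

def stdWord (α : Fin n →₀ ℕ) : List (Fin n) := (Finsupp.toMultiset α).toList

lemma weight_stdWord (α : Fin n →₀ ℕ) : weight (stdWord α) = α := by
  rw [weight, stdWord, Multiset.coe_toList, Finsupp.toMultiset_toFinsupp]

lemma perm_stdWord_weight (w : List (Fin n)) : w.Perm (stdWord (weight w)) := by
  rw [← Multiset.coe_eq_coe, stdWord, Multiset.coe_toList, weight,
    Multiset.toFinsupp_toMultiset]

def monomial (α : Fin n →₀ ℕ) : SkewPoly k q :=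
  (((wordCoeff q (stdWord α))⁻¹ : kˣ) : k) • word q (stdWord α)

def rep : SkewPoly k q →ₐ[k] Module.End k ((Fin n →₀ ℕ) →₀ k) :=
  RingQuot.liftAlgHom k ⟨FreeAlgebra.lift k fun i => shift (twist q) (single i 1), by
    rintro _ _ ⟨i, j, rfl, rfl⟩
    simp only [map_mul, map_smul, FreeAlgebra.lift_ι_apply, shift_mul_shift _ (twist_cocycle q),
      smul_smul, twist_single_single_eq q hq1 hq2 i j, Units.val_mul, add_comm]⟩

lemma rep_skewVar (i : Fin n) : rep q hq1 hq2 (skewVar k q i) = shift (twist q) (single i 1) := by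
  rw [skewVar, rep, RingQuot.liftAlgHom_mkAlgHom_apply, FreeAlgebra.lift_ι_apply]

lemma rep_word (w : List (Fin n)) :
    rep q hq1 hq2 (word q w) = (wordCoeff q w : k) • shift (twist q) (weight w) := by
  induction w with
  | nil =>
    rw [word_nil, map_one, wordCoeff, Units.val_one, one_smul, weight_nil,
      shift_zero _ (twist_zero_left q)]
  | cons i w ih =>
    rw [word_cons, map_mul, rep_skewVar, ih, mul_smul_comm,
      shift_mul_shift _ (twist_cocycle q), smul_smul, wordCoeff, weight_cons, Units.val_mul,
      mul_comm]

/-- The coefficients of `z` in the ascending monomials, read off from `z` acting on `x^0`. -/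
def toCoeff : SkewPoly k q →ₗ[k] (Fin n →₀ ℕ) →₀ k :=
  (LinearMap.applyₗ (single 0 1)).comp (rep q hq1 hq2).toLinearMap

lemma toCoeff_apply (z : SkewPoly k q) : toCoeff q hq1 hq2 z = rep q hq1 hq2 z (single 0 1) :=
  rfl

lemma toCoeff_word (w : List (Fin n)) :
    toCoeff q hq1 hq2 (word q w) = single (weight w) (wordCoeff q w : k) := by
  rw [toCoeff_apply, rep_word, LinearMap.smul_apply, shift_single, twist_zero_right,
    Units.val_one, one_smul, add_zero, smul_single, smul_eq_mul, mul_one]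

lemma toCoeff_monomial (α : Fin n →₀ ℕ) : toCoeff q hq1 hq2 (monomial q α) = single α 1 := by
  rw [monomial, map_smul, toCoeff_word, weight_stdWord, smul_single, smul_eq_mul,
    ← Units.val_mul, inv_mul_cancel, Units.val_one]

include hq1 hq2 in
lemma word_eq_smul_monomial (w : List (Fin n)) :
    word q w = (wordCoeff q w : k) • monomial q (weight w) := by
  obtain ⟨u, hu⟩ := exists_word_eq_smul_of_perm q (perm_stdWord_weight w)
  have hcoeff : (wordCoeff q w : k) = u * wordCoeff q (stdWord (weight w)) := by
    have := congrArg (fun z => toCoeff q hq1 hq2 z (weight w)) hu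
    simpa [toCoeff_word, weight_stdWord] using this
  rw [hu, monomial, smul_smul, hcoeff, mul_assoc, ← Units.val_mul, mul_inv_cancel,
    Units.val_one, mul_one]

include hq1 hq2 in
lemma span_range_monomial : Submodule.span k (Set.range (monomial q)) = ⊤ := by
  refine eq_top_iff.mpr ((span_range_word q).ge.trans (Submodule.span_le.mpr ?_))
  rintro _ ⟨w, rfl⟩
  rw [word_eq_smul_monomial q hq1 hq2]
  exact Submodule.smul_mem _ _ (Submodule.subset_span ⟨weight w, rfl⟩)

lemma toCoeff_injective : Function.Injective (toCoeff q hq1 hq2) := by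
  have hinv : (linearCombination k (monomial q)).comp (toCoeff q hq1 hq2) = LinearMap.id :=
    LinearMap.ext_on_range (span_range_monomial q hq1 hq2) fun α => by
      simp [toCoeff_monomial]
  exact Function.LeftInverse.injective (g := linearCombination k (monomial q))
    (LinearMap.congr_fun hinv)

lemma rep_eq_mul_toCoeff (z : SkewPoly k q) :
    rep q hq1 hq2 z = TwistedConvolution.mul (twist q) (toCoeff q hq1 hq2 z) := by
  refine LinearMap.congr_fun (f := (rep q hq1 hq2).toLinearMap)
    (g := (TwistedConvolution.mul (twist q)).comp (toCoeff q hq1 hq2))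
    (LinearMap.ext_on_range (span_range_monomial q hq1 hq2) fun α => ?_) z
  rw [LinearMap.comp_apply, toCoeff_monomial, mul_single_left, one_smul,
    AlgHom.toLinearMap_apply, monomial, map_smul, rep_word, weight_stdWord, smul_smul,
    ← Units.val_mul, inv_mul_cancel, Units.val_one, one_smul]

lemma toCoeff_mul (z w : SkewPoly k q) :
    toCoeff q hq1 hq2 (z * w) =
      TwistedConvolution.mul (twist q) (toCoeff q hq1 hq2 z) (toCoeff q hq1 hq2 w) := by
  rw [← rep_eq_mul_toCoeff, toCoeff_apply, toCoeff_apply, map_mul, Module.End.mul_apply]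

lemma toCoeff_skewVar (i : Fin n) :
    toCoeff q hq1 hq2 (skewVar k q i) = single (single i 1) 1 := by
  have := toCoeff_word q hq1 hq2 [i]
  rwa [word_cons, word_nil, mul_one, weight_cons, weight_nil, add_zero, wordCoeff, weight_nil,
    twist_zero_right, wordCoeff, one_mul, Units.val_one] at this

lemma degree_eq_of_mem_support_toCoeff {f : SkewPoly k q} {d : ℕ} (hf : f ∈ wordSpan k q d) :
    ∀ α ∈ (toCoeff q hq1 hq2 f).support, α.degree = d := by
  induction hf using Submodule.span_induction with
  | mem x hx =>
    obtain ⟨w, rfl, rfl⟩ := hx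
    intro α hα
    rw [← word, toCoeff_word] at hα
    rw [Finset.mem_singleton.mp (support_single_subset hα), degree_weight]
  | zero => simp
  | add x y _ _ hx hy =>
    intro α hα
    rw [map_add] at hα
    exact (Finset.mem_union.mp (support_add hα)).elim (hx α) (hy α)
  | smul a x _ hx =>
    intro α hα
    rw [map_smul] at hα
    exact hx α (support_smul hα)

lemma commFactor_single_congr_of_forall_mul_eq_mul {f : SkewPoly k q} {d : ℕ}
    (hf : f ∈ wordSpan k q d) (hfn : ∀ a, ∃ b, f * a = b * f) :
    ∀ j, ∀ α ∈ (toCoeff q hq1 hq2 f).support, ∀ α' ∈ (toCoeff q hq1 hq2 f).support,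
      commFactor q α (single j 1) = commFactor q α' (single j 1) := by
  intro j α hα α' hα'
  obtain ⟨b, hb⟩ := hfn (skewVar k q j)
  have hB := congrArg (toCoeff q hq1 hq2) hb
  rw [toCoeff_mul, toCoeff_mul, toCoeff_skewVar] at hB
  have hdeg := degree_eq_of_mem_support_toCoeff q hq1 hq2 hf
  exact Units.ext ((commFactor_val_eq q (twist_eq_of_mul_single_eq hdeg hB hα)).trans
    (commFactor_val_eq q (twist_eq_of_mul_single_eq hdeg hB hα')).symm)

lemma commFactor_single_congr_of_forall_mul_eq_mul' {g : SkewPoly k q} {e : ℕ}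
    (hg : g ∈ wordSpan k q e) (hgn : ∀ a, ∃ b, a * g = g * b) :
    ∀ j, ∀ β ∈ (toCoeff q hq1 hq2 g).support, ∀ β' ∈ (toCoeff q hq1 hq2 g).support,
      commFactor q β (single j 1) = commFactor q β' (single j 1) := by
  intro j β hβ β' hβ'
  obtain ⟨b, hb⟩ := hgn (skewVar k q j)
  have hB := congrArg (toCoeff q hq1 hq2) hb
  rw [toCoeff_mul, toCoeff_mul, toCoeff_skewVar, mul_swap, mul_swap (twist q)] at hB
  have hdeg := degree_eq_of_mem_support_toCoeff q hq1 hq2 hg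
  rw [commFactor_swap q (single j 1) β, commFactor_swap q (single j 1) β']
  exact congrArg _ <| Units.ext ((commFactor_val_eq q (twist_eq_of_mul_single_eq hdeg hB hβ)).trans
    (commFactor_val_eq q (twist_eq_of_mul_single_eq hdeg hB hβ')).symm)

end SkewPoly

theorem skewPoly_normal_skew_commute_general {k : Type*} [Field k] {n : ℕ}
    (q : Fin n → Fin n → kˣ)
    (hq1 : ∀ i : Fin n, q i i = 1)
    (hq2 : ∀ i j : Fin n, q i j = (q j i)⁻¹)
    (d e : ℕ) (f g : SkewPoly k q)
    (hf : f ∈ wordSpan k q d) (hg : g ∈ wordSpan k q e)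
    -- f is normal: fQ = Qf
    (hfn₁ : ∀ a : SkewPoly k q, ∃ b : SkewPoly k q, f * a = b * f)
    -- g is normal: gQ = Qg
    (hgn₂ : ∀ a : SkewPoly k q, ∃ b : SkewPoly k q, a * g = g * b) :
    ∃ p : kˣ, f * g = (p : k) • (g * f) := by
  obtain ⟨p, hp⟩ := SkewPoly.exists_commFactor_eq q
    (SkewPoly.commFactor_single_congr_of_forall_mul_eq_mul q hq1 hq2 hf hfn₁)
    (SkewPoly.commFactor_single_congr_of_forall_mul_eq_mul' q hq1 hq2 hg hgn₂)
  refine ⟨p, SkewPoly.toCoeff_injective q hq1 hq2 ?_⟩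
  rw [map_smul, SkewPoly.toCoeff_mul, SkewPoly.toCoeff_mul]
  refine TwistedConvolution.mul_eq_smul_mul_swap _ fun α hα β hβ => ?_
  rw [SkewPoly.twist_eq_commFactor_mul, hp α hα β hβ, Units.val_mul]

/-- If f and g are homogeneous normal elements of the skew polynomial ring
Q = k_q[x₁,…,xₙ], then there exists p ∈ kˣ with f·g = p·g·f. -/
theorem skewPoly_normal_skew_commute {k : Type*} [Field k] {n : ℕ}
    (q : Fin n → Fin n → kˣ)
    (hq1 : ∀ i : Fin n, q i i = 1)
    (hq2 : ∀ i j : Fin n, q i j = (q j i)⁻¹)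
    (d e : ℕ) (f g : SkewPoly k q)
    (hf : f ∈ wordSpan k q d) (hg : g ∈ wordSpan k q e)
    -- f is normal: fQ = Qf
    (hfn₁ : ∀ a : SkewPoly k q, ∃ b : SkewPoly k q, f * a = b * f)
    (hfn₂ : ∀ a : SkewPoly k q, ∃ b : SkewPoly k q, a * f = f * b)
    -- g is normal: gQ = Qg
    (hgn₁ : ∀ a : SkewPoly k q, ∃ b : SkewPoly k q, g * a = b * g)
    (hgn₂ : ∀ a : SkewPoly k q, ∃ b : SkewPoly k q, a * g = g * b) :
    ∃ p : kˣ, f * g = (p : k) • (g * f) :=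
  skewPoly_normal_skew_commute_general q hq1 hq2 d e f g hf hg hfn₁ hgn₂
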